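/- Let ψ : ℝ → ℝ be differentiable with n vanishing moments (∫ x^k ψ(x) dx = 0 for 0 ≤ k < n), and suppose ‖ψ‖₁, ‖ψ'‖_∞, ‖x^{n+1}ψ‖₁, ‖(x^{n+1}ψ)'‖_∞, and ‖x^n ψ‖₁ are all finite. Then Hψ(x) is well-defined for every x and there is a constant C, depending only on these norms, such that |Hψ(x)| ≤ C/(1+|x|^{n+1}) for all x ∈ ℝ. -/

import Mathlib

open MeasureTheory Filter Real Set Topology
open scoped NNReal

/-!
Near `t = 0` one may subtract the odd term `f x / t`, whose principal value vanishes; what is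
left is bounded by the Lipschitz constant `K` of `f` on `(-1, 1)` and by `|f (x - t)|` outside,
so the principal value `p.v. ∫ f (x - t) / t dt` exists and is at most `2 K + ‖f‖₁` for every `x`.

For the decay, `x ^ (n + 1) - (x - t) ^ (n + 1) = t * ∑_{k ≤ n} x ^ (n - k) * (x - t) ^ k` gives
`x ^ (n + 1) * p.v. ∫ ψ (x - t) / t dt = ∑_{k ≤ n} x ^ (n - k) m_k + p.v. ∫ g (x - t) / t dt`
with `g s = s ^ (n + 1) * ψ s` and `m_k` the moments of `ψ`. The vanishing moments leave only
`m_n`, so `|x| ^ (n + 1) |Hψ x|` is bounded as well.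
-/

lemma lipschitzWith_of_abs_deriv_le {f : ℝ → ℝ} {M : ℝ} (hf : Differentiable ℝ f)
    (hM : ∀ x, |deriv f x| ≤ M) : LipschitzWith M.toNNReal f :=
  lipschitzWith_of_nnnorm_deriv_le hf fun x => by
    rw [← NNReal.coe_le_coe, coe_nnnorm, Real.coe_toNNReal']
    exact (hM x).trans (le_max_left _ _)

lemma integrable_pow_mul_of_le {f : ℝ → ℝ} {k m : ℕ} (hf : Integrable f)
    (hfm : Integrable fun x => x ^ m * f x) (hkm : k ≤ m) :
    Integrable fun x => x ^ k * f x := by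
  refine (hf.abs.add hfm.abs).mono'
    ((continuous_pow k).aestronglyMeasurable.mul hf.aestronglyMeasurable)
    (Eventually.of_forall fun x => ?_)
  have hpow : |x| ^ k ≤ 1 + |x| ^ m := by
    rcases le_total |x| 1 with hx | hx
    · linarith [pow_le_one₀ (abs_nonneg x) hx (n := k), pow_nonneg (abs_nonneg x) m]
    · linarith [pow_le_pow_right₀ hx hkm]
  simp only [Pi.add_apply, norm_mul, norm_pow, Real.norm_eq_abs, abs_mul, abs_pow]
  nlinarith [abs_nonneg (f x)]

lemma Function.Odd.indicator {α β : Type*} [InvolutiveNeg α] [NegZeroClass β] {s : Set α}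
    (hs : -s = s) {g : α → β} (hg : g.Odd) : (s.indicator g).Odd := fun a => by
  have hneg : -a ∈ s ↔ a ∈ s := by rw [← Set.mem_neg, hs]
  by_cases ha : a ∈ s <;> simp [ha, hneg, hg.eq]

lemma integral_eq_zero_of_odd {G : Type*} [MeasurableSpace G] [AddGroup G] [MeasurableNeg G]
    {μ : Measure G} [μ.IsNegInvariant] {g : G → ℝ} (hg : g.Odd) : ∫ x, g x ∂μ = 0 := by
  have h := integral_neg_eq_self g μ
  simp only [hg.eq, integral_neg] at h
  linarith

lemma measurableSet_lt_abs (ε : ℝ) : MeasurableSet {t : ℝ | ε < |t|} :=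
  measurableSet_lt measurable_const measurable_id.abs

lemma tendsto_setIntegral_lt_abs {E : Type*} [NormedAddCommGroup E] [NormedSpace ℝ E]
    {f : ℝ → E} (hf : Integrable f) :
    Tendsto (fun ε => ∫ t in {t : ℝ | ε < |t|}, f t) (𝓝[>] 0) (𝓝 (∫ t, f t)) := by
  simp_rw [← integral_indicator (measurableSet_lt_abs _)]
  refine tendsto_integral_filter_of_dominated_convergence (fun t => ‖f t‖)
    (Eventually.of_forall fun ε => hf.aestronglyMeasurable.indicator (measurableSet_lt_abs ε))
    (Eventually.of_forall fun ε => Eventually.of_forall fun t => norm_indicator_le_norm_self _ _)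
    hf.norm ?_
  filter_upwards [Measure.ae_ne volume 0] with t ht
  refine tendsto_const_nhds.congr' ?_
  filter_upwards [Ioo_mem_nhdsGT (abs_pos.2 ht)] with ε hε
  exact (indicator_of_mem (s := {t : ℝ | ε < |t|}) hε.2 f).symm

lemma integrableOn_comp_sub_div_lt_abs {f : ℝ → ℝ} (hf : Integrable f) (x : ℝ) {ε : ℝ}
    (hε : 0 < ε) : IntegrableOn (fun t => f (x - t) / t) {t : ℝ | ε < |t|} := by
  simp_rw [div_eq_mul_inv]
  refine (hf.comp_sub_left x).integrableOn.mul_bdd (c := ε⁻¹)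
    measurable_inv.aestronglyMeasurable ?_
  filter_upwards [ae_restrict_mem (measurableSet_lt_abs ε)] with t (ht : ε < |t|)
  rw [norm_inv, Real.norm_eq_abs]
  exact inv_anti₀ hε ht.le

noncomputable def hilbertIntegrand (f : ℝ → ℝ) (x t : ℝ) : ℝ :=
  f (x - t) / t - (Ioo (-1) 1).indicator (fun t => f x / t) t

/-- `hilbertPV f x = p.v. ∫ f (x - t) / t dt`, i.e. `π` times the Hilbert transform of `f` at `x`,
written as an absolutely convergent integral (see `tendsto_truncated_hilbertPV`). -/
noncomputable def hilbertPV (f : ℝ → ℝ) (x : ℝ) : ℝ := ∫ t, hilbertIntegrand f x t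

section Lipschitz

variable {f : ℝ → ℝ} {K : ℝ≥0}

lemma abs_hilbertIntegrand_le (hf : LipschitzWith K f) (x t : ℝ) :
    |hilbertIntegrand f x t| ≤ (Ioo (-1) 1).indicator (fun _ => (K : ℝ)) t + |f (x - t)| := by
  by_cases ht : t ∈ Ioo (-1 : ℝ) 1
  · have hlip : |f (x - t) - f x| ≤ K * |t| := by
      simpa [Real.dist_eq] using hf.dist_le_mul (x - t) x
    rw [hilbertIntegrand, indicator_of_mem ht, indicator_of_mem ht, ← sub_div, abs_div]
    linarith [div_le_of_le_mul₀ (abs_nonneg t) K.coe_nonneg hlip, abs_nonneg (f (x - t))]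
  · have h1 : 1 ≤ |t| := not_lt.1 fun h => ht (abs_lt.1 h)
    rw [hilbertIntegrand, indicator_of_notMem ht, indicator_of_notMem ht, sub_zero, zero_add,
      abs_div]
    exact div_le_self (abs_nonneg _) h1

lemma integrable_hilbertIntegrand_majorant (hf : Integrable f) (K x : ℝ) :
    Integrable fun t => (Ioo (-1) 1).indicator (fun _ => K) t + |f (x - t)| :=
  (integrableOn_const measure_Ioo_lt_top.ne).integrable_indicator measurableSet_Ioo
    |>.add (hf.comp_sub_left x).abs

lemma integrable_hilbertIntegrand (hf : LipschitzWith K f) (hfi : Integrable f) (x : ℝ) :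
    Integrable (hilbertIntegrand f x) := by
  refine (integrable_hilbertIntegrand_majorant hfi K x).mono' ?_
    (Eventually.of_forall (abs_hilbertIntegrand_le hf x))
  exact ((hf.continuous.measurable.comp (measurable_const.sub measurable_id)).div measurable_id
    |>.sub ((measurable_const.div measurable_id).indicator measurableSet_Ioo)).aestronglyMeasurable

lemma abs_hilbertPV_le (hf : LipschitzWith K f) (hfi : Integrable f) (x : ℝ) :
    |hilbertPV f x| ≤ 2 * K + ∫ t, |f t| := calc
  |hilbertPV f x| ≤ ∫ t, ((Ioo (-1) 1).indicator (fun _ => (K : ℝ)) t + |f (x - t)|) :=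
    norm_integral_le_of_norm_le (f := hilbertIntegrand f x)
      (integrable_hilbertIntegrand_majorant hfi K x)
      (Eventually.of_forall (abs_hilbertIntegrand_le hf x))
  _ = 2 * K + ∫ t, |f t| := by
    rw [integral_add ((integrableOn_const measure_Ioo_lt_top.ne).integrable_indicator
      measurableSet_Ioo) (hfi.comp_sub_left x).abs, integral_indicator measurableSet_Ioo,
      setIntegral_const, integral_sub_left_eq_self (fun t => |f t|), Real.volume_real_Ioo]
    norm_num

lemma tendsto_truncated_hilbertPV (hf : LipschitzWith K f) (hfi : Integrable f) (x : ℝ) :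
    Tendsto (fun ε => ∫ t in {t : ℝ | ε < |t|}, f (x - t) / t) (𝓝[>] 0)
      (𝓝 (hilbertPV f x)) := by
  refine (tendsto_setIntegral_lt_abs (integrable_hilbertIntegrand hf hfi x)).congr' ?_
  filter_upwards [self_mem_nhdsWithin] with ε (hε : 0 < ε)
  have hodd : ∫ t in {t : ℝ | ε < |t|}, (Ioo (-1) 1).indicator (fun t => f x / t) t = 0 := by
    rw [← integral_indicator (measurableSet_lt_abs ε)]
    exact integral_eq_zero_of_odd <|
      ((Function.Odd.indicator (by simp) fun t => by simp [div_neg]).indicator (by ext; simp))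
  rw [eq_comm, ← sub_eq_zero, ← integral_sub (integrableOn_comp_sub_div_lt_abs hfi x hε)
    (integrable_hilbertIntegrand hf hfi x).integrableOn, ← hodd]
  simp only [hilbertIntegrand, sub_sub_cancel]

lemma hilbertIntegrand_pow_mul (f : ℝ → ℝ) (n : ℕ) (x : ℝ) {t : ℝ} (ht : t ≠ 0) :
    hilbertIntegrand (fun s => s ^ (n + 1) * f s) x t = x ^ (n + 1) * hilbertIntegrand f x t -
      ∑ k ∈ Finset.range (n + 1), x ^ (n - k) * ((x - t) ^ k * f (x - t)) := by
  have hgeom : (∑ k ∈ Finset.range (n + 1), x ^ (n - k) * (x - t) ^ k) * t =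
      x ^ (n + 1) - (x - t) ^ (n + 1) := by
    have h := geom_sum₂_mul x (x - t) (n + 1)
    rw [geom_sum₂_comm, add_tsub_cancel_right, sub_sub_cancel] at h
    simpa only [mul_comm] using h
  simp only [← mul_assoc, ← Finset.sum_mul]
  by_cases hI : t ∈ Ioo (-1 : ℝ) 1 <;>
  · simp only [hilbertIntegrand, hI, indicator_of_mem, indicator_of_notMem, not_false_eq_true]
    field_simp
    linear_combination f (x - t) * hgeom

lemma pow_mul_hilbertPV {n : ℕ} (hf : LipschitzWith K f)
    (hmom : ∀ k ≤ n, Integrable fun s => s ^ k * f s) (x : ℝ) :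
    x ^ (n + 1) * hilbertPV f x = (∑ k ∈ Finset.range (n + 1), x ^ (n - k) * ∫ s, s ^ k * f s) +
      hilbertPV (fun s => s ^ (n + 1) * f s) x := by
  have hfi : Integrable f := by simpa using hmom 0 n.zero_le
  have hterm : ∀ k ∈ Finset.range (n + 1),
      Integrable fun t => x ^ (n - k) * ((x - t) ^ k * f (x - t)) := fun k hk =>
    ((hmom k (Nat.lt_succ_iff.1 (Finset.mem_range.1 hk))).comp_sub_left x).const_mul _
  have hg : hilbertPV (fun s => s ^ (n + 1) * f s) x = x ^ (n + 1) * hilbertPV f x -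
      ∑ k ∈ Finset.range (n + 1), x ^ (n - k) * ∫ s, s ^ k * f s := by
    rw [hilbertPV, integral_congr_ae ((Measure.ae_ne volume 0).mono
        fun t ht => hilbertIntegrand_pow_mul f n x ht),
      integral_sub ((integrable_hilbertIntegrand hf hfi x).const_mul _)
        (integrable_finsetSum _ hterm), integral_const_mul, integral_finsetSum _ hterm]
    congr 2 with k
    rw [integral_const_mul, integral_sub_left_eq_self (fun s => s ^ k * f s)]
  linarith

end Lipschitz

theorem hilbert_transform_decay_of_vanishing_moments_general (ψ : ℝ → ℝ) (n : ℕ)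
    (hdiff : Differentiable ℝ ψ)
    (hmom : ∀ k < n, ∫ x, x ^ k * ψ x = 0)
    (hint : Integrable ψ) (M : ℝ) (hM : ∀ x, |deriv ψ x| ≤ M)
    (hgint : Integrable (fun x => x ^ (n + 1) * ψ x)) (M' : ℝ)
    (hM' : ∀ x, |deriv (fun x => x ^ (n + 1) * ψ x) x| ≤ M') :
    ∃ Hψ : ℝ → ℝ,
      (∀ x : ℝ, Tendsto (fun ε : ℝ => (1 / π) * ∫ t in {t : ℝ | ε < |t|}, ψ (x - t) / t)
        (nhdsWithin 0 (Ioi 0)) (nhds (Hψ x))) ∧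
      ∃ C : ℝ, 0 < C ∧ ∀ x : ℝ, |Hψ x| ≤ C / (1 + |x| ^ (n + 1)) := by
  set g := fun x => x ^ (n + 1) * ψ x
  have hψ := lipschitzWith_of_abs_deriv_le hdiff hM
  have hg : LipschitzWith M'.toNNReal g :=
    lipschitzWith_of_abs_deriv_le ((differentiable_pow (n + 1)).mul hdiff) hM'
  set A := (2 * M.toNNReal + ∫ t, |ψ t|) + |∫ s, s ^ n * ψ s| +
    (2 * M'.toNNReal + ∫ t, |g t|)
  have hdecay : ∀ x, (1 + |x| ^ (n + 1)) * |hilbertPV ψ x| ≤ A := fun x => by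
    have hpow : x ^ (n + 1) * hilbertPV ψ x = (∫ s, s ^ n * ψ s) + hilbertPV g x := by
      rw [pow_mul_hilbertPV hψ (fun k hk => integrable_pow_mul_of_le hint hgint (by omega)),
        Finset.sum_range_succ, Finset.sum_eq_zero fun k hk => by
          rw [hmom k (Finset.mem_range.1 hk), mul_zero], zero_add, Nat.sub_self, pow_zero, one_mul]
    calc (1 + |x| ^ (n + 1)) * |hilbertPV ψ x|
        = |hilbertPV ψ x| + |x ^ (n + 1) * hilbertPV ψ x| := by rw [abs_mul, abs_pow]; ring
      _ ≤ A := by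
        rw [hpow]
        linarith [abs_hilbertPV_le hψ hint x, abs_hilbertPV_le hg hgint x,
          abs_add_le (∫ s, s ^ n * ψ s) (hilbertPV g x)]
  refine ⟨fun x => hilbertPV ψ x / π, fun x => ?_, (A + 1) / π, by positivity, fun x => ?_⟩
  · simpa only [one_div_mul_eq_div] using (tendsto_truncated_hilbertPV hψ hint x).div_const π
  · rw [abs_div, abs_of_pos pi_pos, div_div, div_le_div_iff₀ pi_pos (by positivity)]
    nlinarith [hdecay x, pi_pos]

/-- **decay and vanishing moments.** If `ψ` is differentiable with `n`
vanishing moments and `‖ψ‖₁`, `‖ψ'‖_∞`, `‖x^{n+1}ψ‖₁`, `‖(x^{n+1}ψ)'‖_∞`, `‖x^n ψ‖₁`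
are all finite, then the principal-value Hilbert transform `Hψ(x)` is well-defined for
every `x` and `|Hψ(x)| ≤ C/(1+|x|^{n+1})` for some constant `C`. -/
theorem hilbert_transform_decay_of_vanishing_moments (ψ : ℝ → ℝ) (n : ℕ)
    (hdiff : Differentiable ℝ ψ)
    (hmom : ∀ k < n, ∫ x, x ^ k * ψ x = 0)
    (hint : Integrable ψ) (M : ℝ) (hM : ∀ x, |deriv ψ x| ≤ M)
    (hgint : Integrable (fun x => x ^ (n + 1) * ψ x)) (M' : ℝ)
    (hM' : ∀ x, |deriv (fun x => x ^ (n + 1) * ψ x) x| ≤ M')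
    (hnint : Integrable (fun x => x ^ n * ψ x)) :
    ∃ Hψ : ℝ → ℝ,
      (∀ x : ℝ, Tendsto (fun ε : ℝ => (1 / π) * ∫ t in {t : ℝ | ε < |t|}, ψ (x - t) / t)
        (nhdsWithin 0 (Ioi 0)) (nhds (Hψ x))) ∧
      ∃ C : ℝ, 0 < C ∧ ∀ x : ℝ, |Hψ x| ≤ C / (1 + |x| ^ (n + 1)) :=
  hilbert_transform_decay_of_vanishing_moments_general ψ n hdiff hmom hint M hM hgint M' hM'
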